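/- arXiv:2205.04457 — 2 statements merged into one kernel-verified Lean document; each statement's English description precedes it below -/
import Mathlib

section
/- Every Hermitian operator on ℂ²⊗ℂ² that commutes with the exchange Hamiltonian H^ex_Λ = Λσ₊⊗σ₋ + Λ*σ₋⊗σ₊ (with Λ ≠ 0) also commutes with the dephasing Hamiltonian H^dep_Δ = Δ σ_z⊗σ_z for every Δ ∈ ℝ. -/
open Matrix Complex
open scoped Matrix Kronecker

noncomputable section

/-- Pauli X. -/
def σx : Matrix (Fin 2) (Fin 2) ℂ := !![0, 1; 1, 0]
/-- Pauli Y. -/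
def σy : Matrix (Fin 2) (Fin 2) ℂ := !![0, -Complex.I; Complex.I, 0]
/-- Pauli Z (ground state `0` has eigenvalue -1, excited `1` has +1). -/
def σz : Matrix (Fin 2) (Fin 2) ℂ := !![-1, 0; 0, 1]
/-- Raising operator `|1⟩⟨0|`. -/
def σp : Matrix (Fin 2) (Fin 2) ℂ := !![0, 0; 1, 0]
/-- Lowering operator `|0⟩⟨1|`. -/
def σm : Matrix (Fin 2) (Fin 2) ℂ := !![0, 1; 0, 0]
/-- Projector `|1⟩⟨1|`. -/
def e11 : Matrix (Fin 2) (Fin 2) ℂ := !![0, 0; 0, 1]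

/-- Partial trace over the second factor. -/
def trB (M : Matrix (Fin 2 × Fin 2) (Fin 2 × Fin 2) ℂ) : Matrix (Fin 2) (Fin 2) ℂ :=
  Matrix.of fun i j => ∑ k : Fin 2, M (i, k) (j, k)

/-- Partial trace over the first factor. -/
def trA (M : Matrix (Fin 2 × Fin 2) (Fin 2 × Fin 2) ℂ) : Matrix (Fin 2) (Fin 2) ℂ :=
  Matrix.of fun i j => ∑ k : Fin 2, M (k, i) (k, j)

/-- Excitation-number-conserving interaction Hamiltonian. -/
def Hnum (Λ : ℂ) (Δ : ℝ) : Matrix (Fin 2 × Fin 2) (Fin 2 × Fin 2) ℂ :=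
  Λ • (σp ⊗ₖ σm) + (starRingEnd ℂ Λ) • (σm ⊗ₖ σp) + (Δ : ℂ) • (σz ⊗ₖ σz)

/-- Total excitation number operator `N = |1⟩⟨1|⊗𝟙 + 𝟙⊗|1⟩⟨1|`. -/
def Nop : Matrix (Fin 2 × Fin 2) (Fin 2 × Fin 2) ℂ :=
  e11 ⊗ₖ (1 : Matrix (Fin 2) (Fin 2) ℂ) + (1 : Matrix (Fin 2) (Fin 2) ℂ) ⊗ₖ e11

/-- Bare qubit Hamiltonian `ω|1⟩⟨1|`. -/
def Hbare (ω : ℝ) : Matrix (Fin 2) (Fin 2) ℂ := !![0, 0; 0, (ω : ℂ)]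

/-- Pure (rank-one) density matrix `|ψ⟩⟨ψ|`. -/
def pureRho (ψ : Fin 2 × Fin 2 → ℂ) : Matrix (Fin 2 × Fin 2) (Fin 2 × Fin 2) ℂ :=
  Matrix.vecMulVec ψ (star ψ)

/-- Liouville–von Neumann derivative `ρ̇ = -i[H,ρ]`. -/
def rhodot (H ρ : Matrix (Fin 2 × Fin 2) (Fin 2 × Fin 2) ℂ) :
    Matrix (Fin 2 × Fin 2) (Fin 2 × Fin 2) ℂ :=
  -Complex.I • (H * ρ - ρ * H)

/-- The no-double-excitation state vector `ψ₀|00⟩ + ψ_B|01⟩ + ψ_A|10⟩`. -/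
def ψvec (ψ0 ψB ψA : ℂ) : Fin 2 × Fin 2 → ℂ :=
  fun p => !![ψ0, ψB; ψA, 0] p.1 p.2

/-- The total Hamiltonian `H_A⊗𝟙 + 𝟙⊗H_B + H^num_{Λ,Δ}`. -/
def Htot (ωA ωB : ℝ) (Λ : ℂ) (Δ : ℝ) : Matrix (Fin 2 × Fin 2) (Fin 2 × Fin 2) ℂ :=
  Hbare ωA ⊗ₖ (1 : Matrix (Fin 2) (Fin 2) ℂ) + (1 : Matrix (Fin 2) (Fin 2) ℂ) ⊗ₖ Hbare ωB
    + Hnum Λ Δ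

/-- Rotating-coherence internal energy `U_RC = ρ₁₁ · Im(ρ̇₀₁/ρ₀₁)`. -/
def URC (ρ ρd : Matrix (Fin 2) (Fin 2) ℂ) : ℝ :=
  (ρ 1 1).re * ((ρd 0 1) / (ρ 0 1)).im

/- The exchange Hamiltonian squares to `|Λ|²` times the projector `P` onto the single-excitation
subspace span{|01⟩, |10⟩}, and `σ_z ⊗ σ_z = 1 - 2P`. An operator commuting with `H^ex` commutes
with `(H^ex)²`, hence (as `Λ ≠ 0`) with `P`, hence with `σ_z ⊗ σ_z`. -/

theorem kronecker_swap_add_mul_self {R n : Type*} [CommRing R] [Fintype n] [DecidableEq n]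
    {a b : Matrix n n R} (ha : a * a = 0) (hb : b * b = 0) (x y : R) :
    (x • (a ⊗ₖ b) + y • (b ⊗ₖ a)) * (x • (a ⊗ₖ b) + y • (b ⊗ₖ a)) =
      (x * y) • ((a * b) ⊗ₖ (b * a) + (b * a) ⊗ₖ (a * b)) := by
  simp only [add_mul, mul_add, smul_mul_smul, ← mul_kronecker_mul, ha, hb, kronecker_zero,
    smul_zero, zero_add, add_zero, smul_add, mul_comm y x]
  exact add_comm _ _

theorem σp_mul_σp : σp * σp = 0 := by
  ext i j; fin_cases i <;> fin_cases j <;> simp [σp]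

theorem σm_mul_σm : σm * σm = 0 := by
  ext i j; fin_cases i <;> fin_cases j <;> simp [σm]

theorem σz_kronecker_σz :
    σz ⊗ₖ σz = 1 - (2 : ℂ) • ((σp * σm) ⊗ₖ (σm * σp) + (σm * σp) ⊗ₖ (σp * σm)) := by
  ext ⟨i, j⟩ ⟨k, l⟩
  fin_cases i <;> fin_cases j <;> fin_cases k <;> fin_cases l <;>
    simp [σz, σp, σm] <;> norm_num

theorem stmt_11_general (Λ : ℂ) (hΛ : Λ ≠ 0)
    (O : Matrix (Fin 2 × Fin 2) (Fin 2 × Fin 2) ℂ)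
    (hc : Commute O (Λ • (σp ⊗ₖ σm) + (starRingEnd ℂ Λ) • (σm ⊗ₖ σp))) :
    ∀ Δ : ℝ, Commute O ((Δ : ℂ) • (σz ⊗ₖ σz)) := by
  intro Δ
  have hP := hc.mul_right hc
  rw [kronecker_swap_add_mul_self σp_mul_σp σm_mul_σm,
    Commute.smul_right_iff₀ (mul_ne_zero hΛ ((map_ne_zero _).2 hΛ))] at hP
  rw [σz_kronecker_σz]
  exact ((Commute.one_right O).sub_right (hP.smul_right 2)).smul_right _

/-- Every Hermitian operator commuting with the exchange Hamiltonian (with `Λ ≠ 0`)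
also commutes with the dephasing Hamiltonian `Δσ_z⊗σ_z`, for every `Δ`. -/
theorem stmt_11 (Λ : ℂ) (hΛ : Λ ≠ 0)
    (O : Matrix (Fin 2 × Fin 2) (Fin 2 × Fin 2) ℂ) (hO : O.IsHermitian)
    (hc : Commute O (Λ • (σp ⊗ₖ σm) + (starRingEnd ℂ Λ) • (σm ⊗ₖ σp))) :
    ∀ Δ : ℝ, Commute O ((Δ : ℂ) • (σz ⊗ₖ σz)) :=
  stmt_11_general Λ hΛ O hc
end
end

section
/- Define the rotating-coherence internal energy of a qubit with state ρ (with ρ₀₁ ≠ 0) and derivative ρ̇ as U_RC = ρ₁₁ · Im(ρ̇₀₁/ρ₀₁). For the no-double-excitation dynamics with Hamiltonian H = H_A⊗𝟙+𝟙⊗H_B+H^num_{Λ,Δ}, assume ψ₀ψ_A ≠ 0 and ψ₀ψ_B ≠ 0. Then U_RC^A + U_RC^B = ⟨ψ|H|ψ⟩ - Δ. -/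
open Matrix Complex
open scoped Matrix Kronecker

noncomputable section

/-! For a pure state `ρ = ψψ†` and Hermitian `H`, `ρ̇ = -i(φψ† - ψφ†)` with `φ = Hψ`, and `H` maps
the no-double-excitation sector into itself, so every partial trace is explicit. In
`ρ̇_A(0,1) / ρ_A(0,1)`, with `ρ_A(0,1) = ψ₀ψ̄_A`, the factor `ψ₀` cancels and
`U_RC^A = (ω_A - 2Δ)|ψ_A|² + Re(Λψ_Bψ̄_A)`: the coherence `|00⟩⟨10|` picks up the phase rate
`2Δ` because `σ_z ⊗ σ_z` is `+1` on `|00⟩` and `-1` on `|10⟩`. `U_RC^B` follows by exchanging the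
qubits. The energy is `ω_A|ψ_A|² + ω_B|ψ_B|² + Δ(|ψ₀|² - |ψ_A|² - |ψ_B|²) + 2 Re(Λψ_Bψ̄_A)`,
so the difference is `Δ(|ψ₀|² + |ψ_A|² + |ψ_B|²) = Δ`. -/

open scoped ComplexConjugate

-- Also true at `a = 0`, where `w / 0 = 0`.
lemma normSq_mul_im_div_conj (a w : ℂ) : normSq a * (w / conj a).im = (w * a).im := by
  rcases eq_or_ne a 0 with rfl | ha
  · simp
  · rw [← im_ofReal_mul, ← mul_conj, mul_assoc, mul_div_cancel₀ _ (by simpa using ha), mul_comm]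

lemma rhodot_pureRho {H : Matrix (Fin 2 × Fin 2) (Fin 2 × Fin 2) ℂ} (hH : H.IsHermitian)
    (ψ : Fin 2 × Fin 2 → ℂ) :
    rhodot H (pureRho ψ) = -I • (vecMulVec (H *ᵥ ψ) (star ψ) - vecMulVec ψ (star (H *ᵥ ψ))) := by
  rw [rhodot, pureRho, mul_vecMulVec, vecMulVec_mul, star_mulVec, hH.eq]

lemma trB_vecMulVec_ψvec (ψ0 ψB ψA φ0 φB φA : ℂ) :
    trB (vecMulVec (ψvec ψ0 ψB ψA) (star (ψvec φ0 φB φA))) =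
      !![ψ0 * conj φ0 + ψB * conj φB, ψ0 * conj φA; ψA * conj φ0, ψA * conj φA] := by
  ext i j
  fin_cases i <;> fin_cases j <;> simp [trB, ψvec, vecMulVec_apply]

lemma trA_eq_trB_submatrix_swap (M : Matrix (Fin 2 × Fin 2) (Fin 2 × Fin 2) ℂ) :
    trA M = trB (M.submatrix Prod.swap Prod.swap) := rfl

lemma pureRho_submatrix_swap (ψ : Fin 2 × Fin 2 → ℂ) :
    (pureRho ψ).submatrix Prod.swap Prod.swap = pureRho (ψ ∘ Prod.swap) := rfl

lemma rhodot_submatrix_swap (H ρ : Matrix (Fin 2 × Fin 2) (Fin 2 × Fin 2) ℂ) :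
    (rhodot H ρ).submatrix Prod.swap Prod.swap =
      rhodot (H.submatrix Prod.swap Prod.swap) (ρ.submatrix Prod.swap Prod.swap) := by
  rw [rhodot, rhodot, ← Equiv.coe_prodComm, submatrix_mul_equiv, submatrix_mul_equiv]
  rfl

lemma ψvec_comp_swap (ψ0 ψB ψA : ℂ) : ψvec ψ0 ψB ψA ∘ Prod.swap = ψvec ψ0 ψA ψB := by
  ext ⟨i, j⟩
  fin_cases i <;> fin_cases j <;> rfl

section Htot

variable (ωA ωB : ℝ) (Λ : ℂ) (Δ : ℝ)

lemma Htot_isHermitian : (Htot ωA ωB Λ Δ).IsHermitian := by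
  ext ⟨i, j⟩ ⟨k, l⟩
  fin_cases i <;> fin_cases j <;> fin_cases k <;> fin_cases l <;>
    simp [Htot, Hnum, Hbare, σp, σm, σz, conjTranspose_apply]

lemma Htot_submatrix_swap :
    (Htot ωA ωB Λ Δ).submatrix Prod.swap Prod.swap = Htot ωB ωA (conj Λ) Δ := by
  ext ⟨i, j⟩ ⟨k, l⟩
  fin_cases i <;> fin_cases j <;> fin_cases k <;> fin_cases l <;>
    simp [Htot, Hnum, Hbare, σp, σm, σz, add_comm (ωA : ℂ)]

lemma Htot_mulVec_ψvec (ψ0 ψB ψA : ℂ) :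
    Htot ωA ωB Λ Δ *ᵥ ψvec ψ0 ψB ψA =
      ψvec (Δ * ψ0) ((ωB - Δ) * ψB + conj Λ * ψA) ((ωA - Δ) * ψA + Λ * ψB) := by
  ext ⟨i, j⟩
  fin_cases i <;> fin_cases j <;>
    simp [Htot, Hnum, Hbare, σp, σm, σz, ψvec, mulVec, dotProduct, Fintype.sum_prod_type,
      sub_mul] <;> ring

lemma expectation_Htot_ψvec (ψ0 ψB ψA : ℂ) :
    (star (ψvec ψ0 ψB ψA) ⬝ᵥ Htot ωA ωB Λ Δ *ᵥ ψvec ψ0 ψB ψA).re =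
      ωA * normSq ψA + ωB * normSq ψB + Δ * (normSq ψ0 - normSq ψA - normSq ψB)
        + 2 * (Λ * ψB * conj ψA).re := by
  rw [Htot_mulVec_ψvec]
  simp [dotProduct, Fintype.sum_prod_type, ψvec, normSq_apply]
  ring

variable {ψ0 : ℂ} (ψB ψA : ℂ)

lemma URC_trB_pureRho_ψvec (hψ0 : ψ0 ≠ 0) :
    URC (trB (pureRho (ψvec ψ0 ψB ψA)))
        (trB (rhodot (Htot ωA ωB Λ Δ) (pureRho (ψvec ψ0 ψB ψA)))) =
      (ωA - 2 * Δ) * normSq ψA + (Λ * ψB * conj ψA).re := by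
  set X := (2 * Δ - ωA) * conj ψA - conj Λ * conj ψB
  have hρ01 : trB (pureRho (ψvec ψ0 ψB ψA)) 0 1 = ψ0 * conj ψA := by
    simp [pureRho, trB_vecMulVec_ψvec]
  have hρ11 : trB (pureRho (ψvec ψ0 ψB ψA)) 1 1 = normSq ψA := by
    simp [pureRho, trB_vecMulVec_ψvec, mul_conj]
  have hρd01 : trB (rhodot (Htot ωA ωB Λ Δ) (pureRho (ψvec ψ0 ψB ψA))) 0 1 = ψ0 * (-I * X) := by
    rw [rhodot_pureRho (Htot_isHermitian ωA ωB Λ Δ), Htot_mulVec_ψvec]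
    simp [trB, ψvec, vecMulVec_apply, X]
    ring
  rw [URC, hρ01, hρ11, hρd01, ofReal_re, mul_div_mul_left _ _ hψ0, normSq_mul_im_div_conj]
  simp [X, normSq_apply]
  ring

lemma URC_trA_pureRho_ψvec (hψ0 : ψ0 ≠ 0) :
    URC (trA (pureRho (ψvec ψ0 ψB ψA)))
        (trA (rhodot (Htot ωA ωB Λ Δ) (pureRho (ψvec ψ0 ψB ψA)))) =
      (ωB - 2 * Δ) * normSq ψB + (conj Λ * ψA * conj ψB).re := by
  rw [trA_eq_trB_submatrix_swap, trA_eq_trB_submatrix_swap, rhodot_submatrix_swap,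
    pureRho_submatrix_swap, Htot_submatrix_swap, ψvec_comp_swap,
    URC_trB_pureRho_ψvec _ _ _ _ _ _ hψ0]

end Htot

theorem stmt_15_general (ψ0 ψA ψB Λ : ℂ) (ωA ωB Δ : ℝ)
    (hnorm : Complex.normSq ψ0 + Complex.normSq ψA + Complex.normSq ψB = 1)
    (hA : ψ0 * ψA ≠ 0) :
    URC (trB (pureRho (ψvec ψ0 ψB ψA)))
        (trB (rhodot (Htot ωA ωB Λ Δ) (pureRho (ψvec ψ0 ψB ψA))))
      + URC (trA (pureRho (ψvec ψ0 ψB ψA)))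
        (trA (rhodot (Htot ωA ωB Λ Δ) (pureRho (ψvec ψ0 ψB ψA))))
      = (star (ψvec ψ0 ψB ψA) ⬝ᵥ (Htot ωA ωB Λ Δ).mulVec (ψvec ψ0 ψB ψA)).re - Δ := by
  have hψ0 : ψ0 ≠ 0 := left_ne_zero_of_mul hA
  have hcross : (conj Λ * ψA * conj ψB).re = (Λ * ψB * conj ψA).re := by
    rw [← conj_re, map_mul, map_mul, conj_conj, conj_conj, mul_right_comm]
  rw [URC_trB_pureRho_ψvec _ _ _ _ _ _ hψ0, URC_trA_pureRho_ψvec _ _ _ _ _ _ hψ0,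
    expectation_Htot_ψvec, hcross]
  linear_combination (-Δ) * hnorm

/-- The rotating-coherence internal energies sum to `⟨ψ|H|ψ⟩ - Δ` in the
no-double-excitation sector (inconsistency offset `-Δ`). -/
theorem stmt_15 (ψ0 ψA ψB Λ : ℂ) (ωA ωB Δ : ℝ)
    (hnorm : Complex.normSq ψ0 + Complex.normSq ψA + Complex.normSq ψB = 1)
    (hA : ψ0 * ψA ≠ 0) (hB : ψ0 * ψB ≠ 0) :
    URC (trB (pureRho (ψvec ψ0 ψB ψA)))
        (trB (rhodot (Htot ωA ωB Λ Δ) (pureRho (ψvec ψ0 ψB ψA))))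
      + URC (trA (pureRho (ψvec ψ0 ψB ψA)))
        (trA (rhodot (Htot ωA ωB Λ Δ) (pureRho (ψvec ψ0 ψB ψA))))
      = (star (ψvec ψ0 ψB ψA) ⬝ᵥ (Htot ωA ωB Λ Δ).mulVec (ψvec ψ0 ψB ψA)).re - Δ :=
  stmt_15_general ψ0 ψA ψB Λ ωA ωB Δ hnorm hA
end
end
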